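/- arXiv:2210.00779 — 2 statements merged into one kernel-verified Lean document; each statement's English description precedes it below -/
import Mathlib

section
/- Extreme path event III (Lemma 3.2, (14)): Assume sup_{t∈[0,T]} E[|L(Y_t)|^p] < ∞ for some p>1, and let η∈(0,1). Then for every q with 0<q<pη, sup_{0≤i≤2^ℓ−1} ℙ( ∫_{t_i^ℓ}^{t_{i+1}^ℓ} |L(Y_s)| ds > h_ℓ^{1−η} ) = o(h_ℓ^q) as ℓ→∞, where h_ℓ = 2^{−ℓ}T and t_i^ℓ = i·h_ℓ. -/
/-!
On a cell `I` of length `h`, Hölder's inequality gives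
`(∫_I |L(Y_s)| ds)^p ≤ h^(p-1) ∫_I |L(Y_s)|^p ds`, so by Tonelli the `p`-th moment of the cell
integral is at most `M h^p`, where `M` is the uniform bound on `E|L(Y_t)|^p`. Markov's inequality
at level `h^(1-η)` then bounds every cell probability by `M h^(pη)`, uniformly in the cell, and
`h^(pη) / h^q → 0` since `q < pη`.
-/

open MeasureTheory ProbabilityTheory Filter Set

noncomputable section

/-- `W` is a standard one-dimensional Brownian motion under `P`. -/
def IsStandardBM {Ω : Type*} [MeasurableSpace Ω] (P : Measure Ω) (W : ℝ → Ω → ℝ) : Prop :=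
  (∀ t, Measurable (W t)) ∧
  (∀ ω, W 0 ω = 0) ∧
  (∀ ω, Continuous fun t => W t ω) ∧
  (∀ s t : ℝ, 0 ≤ s → s ≤ t →
    Measure.map (fun ω => W t ω - W s ω) P = gaussianReal 0 (Real.toNNReal (t - s))) ∧
  (∀ (n : ℕ) (t : Fin (n + 1) → ℝ), Monotone t → (∀ i, 0 ≤ t i) →
    iIndepFun
      (fun i : Fin n => fun ω => W (t i.succ) ω - W (t i.castSucc) ω) P)

open scoped ENNReal Topology

theorem lintegral_rpow_le_lintegral_rpow_mul_measure_univ {α : Type*} [MeasurableSpace α]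
    {ν : Measure α} {f : α → ℝ≥0∞} (hf : AEMeasurable f ν) {p : ℝ} (hp : 1 ≤ p) :
    (∫⁻ x, f x ∂ν) ^ p ≤ (∫⁻ x, f x ^ p ∂ν) * ν univ ^ (p - 1) := by
  have hp0 : 0 < p := one_pos.trans_le hp
  have holder := eLpNorm'_le_eLpNorm'_mul_rpow_measure_univ one_pos hp hf.aestronglyMeasurable
  simp only [eLpNorm'_eq_lintegral_enorm, enorm_eq_self, ENNReal.rpow_one, div_one] at holder
  calc (∫⁻ x, f x ∂ν) ^ p
      ≤ ((∫⁻ x, f x ^ p ∂ν) ^ (1 / p) * ν univ ^ (1 - 1 / p)) ^ p :=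
        ENNReal.rpow_le_rpow holder hp0.le
    _ = (∫⁻ x, f x ^ p ∂ν) * ν univ ^ (p - 1) := by
        rw [ENNReal.mul_rpow_of_nonneg _ _ hp0.le, ← ENNReal.rpow_mul, ← ENNReal.rpow_mul,
          one_div_mul_cancel hp0.ne', ENNReal.rpow_one, sub_mul, one_div_mul_cancel hp0.ne',
          one_mul]

theorem lintegral_rpow_lintegral_le {α Ω : Type*} [MeasurableSpace α] [MeasurableSpace Ω]
    {ν : Measure α} [SFinite ν] {μ : Measure Ω} [SFinite μ] {F : α → Ω → ℝ≥0∞}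
    (hF : Measurable (Function.uncurry F)) {p : ℝ} (hp : 1 ≤ p) {M : ℝ≥0∞}
    (hM : ∀ᵐ s ∂ν, ∫⁻ ω, F s ω ^ p ∂μ ≤ M) :
    ∫⁻ ω, (∫⁻ s, F s ω ∂ν) ^ p ∂μ ≤ M * ν univ ^ p := by
  have hFp : Measurable (Function.uncurry fun s ω => F s ω ^ p) := hF.pow_const p
  have hFp_int : Measurable fun ω => ∫⁻ s, F s ω ^ p ∂ν :=
    (hFp.comp measurable_swap).lintegral_prod_right'
  calc ∫⁻ ω, (∫⁻ s, F s ω ∂ν) ^ p ∂μ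
      ≤ ∫⁻ ω, (∫⁻ s, F s ω ^ p ∂ν) * ν univ ^ (p - 1) ∂μ :=
        lintegral_mono fun ω =>
          lintegral_rpow_le_lintegral_rpow_mul_measure_univ (hF.of_uncurry_right).aemeasurable hp
    _ = (∫⁻ s, ∫⁻ ω, F s ω ^ p ∂μ ∂ν) * ν univ ^ (p - 1) := by
        rw [lintegral_mul_const _ hFp_int, lintegral_lintegral_swap (f := fun ω s => F s ω ^ p)
          (hFp.comp measurable_swap).aemeasurable]
    _ ≤ (M * ν univ) * ν univ ^ (p - 1) := by
        gcongr
        simpa using lintegral_mono_ae hM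
    _ = M * ν univ ^ p := by
        have hsplit : ν univ ^ p = ν univ * ν univ ^ (p - 1) := by
          simpa using
            ENNReal.rpow_add_of_nonneg (x := ν univ) 1 (p - 1) zero_le_one (sub_nonneg.2 hp)
        rw [hsplit, mul_assoc]

theorem measure_lt_le_lintegral_rpow_div {Ω : Type*} [MeasurableSpace Ω] {μ : Measure Ω}
    {A : Ω → ℝ≥0∞} (hA : AEMeasurable A μ) {ε : ℝ≥0∞} (hε0 : ε ≠ 0) (hε : ε ≠ ⊤) {p : ℝ}
    (hp : 0 < p) :
    μ {ω | ε < A ω} ≤ (∫⁻ ω, A ω ^ p ∂μ) / ε ^ p :=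
  (measure_mono fun _ hω => ENNReal.rpow_le_rpow (le_of_lt hω) hp.le).trans
    (meas_ge_le_lintegral_div (hA.pow_const p)
      (ENNReal.rpow_pos (pos_iff_ne_zero.2 hε0) hε).ne' (ENNReal.rpow_ne_top_of_nonneg hp.le hε))

theorem measure_lt_lintegral_le_of_lintegral_rpow_le {α Ω : Type*} [MeasurableSpace α]
    [MeasurableSpace Ω]
    {ν : Measure α} [SFinite ν] {μ : Measure Ω} [SFinite μ] {F : α → Ω → ℝ≥0∞}
    (hF : Measurable (Function.uncurry F)) {p : ℝ} (hp : 1 ≤ p) {M : ℝ≥0∞}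
    (hM : ∀ᵐ s ∂ν, ∫⁻ ω, F s ω ^ p ∂μ ≤ M) {ε : ℝ≥0∞} (hε0 : ε ≠ 0) (hε : ε ≠ ⊤) :
    μ {ω | ε < ∫⁻ s, F s ω ∂ν} ≤ M * ν univ ^ p / ε ^ p :=
  (measure_lt_le_lintegral_rpow_div
    (hF.comp measurable_swap).lintegral_prod_right'.aemeasurable hε0 hε (one_pos.trans_le hp)).trans
    (ENNReal.div_le_div_right (lintegral_rpow_lintegral_le hF hp hM) _)

theorem ofReal_rpow_div_ofReal_rpow_one_sub {h : ℝ} (hh : 0 < h) (p η : ℝ) :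
    ENNReal.ofReal h ^ p / ENNReal.ofReal (h ^ (1 - η)) ^ p = ENNReal.ofReal (h ^ (p * η)) := by
  rw [ENNReal.ofReal_rpow_of_pos hh, ENNReal.ofReal_rpow_of_pos (Real.rpow_pos_of_pos hh _),
    ← ENNReal.ofReal_div_of_pos (Real.rpow_pos_of_pos (Real.rpow_pos_of_pos hh _) _),
    ← Real.rpow_mul hh.le, ← Real.rpow_sub hh]
  ring_nf

theorem ContinuousOn.measurable_comp {α β γ : Type*} [MeasurableSpace α] [TopologicalSpace β]
    [MeasurableSpace β] [OpensMeasurableSpace β] [TopologicalSpace γ] [MeasurableSpace γ]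
    [BorelSpace γ] {f : β → γ} {s : Set β} (hf : ContinuousOn f s) {g : α → β}
    (hg : Measurable g) (hgs : ∀ x, g x ∈ s) : Measurable fun x => f (g x) :=
  (continuousOn_iff_continuous_domRestrict.1 hf).measurable.comp (hg.subtype_mk (h := hgs))

theorem measurable_uncurry_comp_projIcc {Ω E : Type*} [MeasurableSpace Ω] [TopologicalSpace E]
    [TopologicalSpace.PseudoMetrizableSpace E] [MeasurableSpace E] [BorelSpace E]
    {X : ℝ → Ω → E} {a b : ℝ} (hab : a ≤ b) (hcont : ∀ ω, ContinuousOn (X · ω) (Icc a b))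
    (hmeas : ∀ t ∈ Icc a b, Measurable (X t)) :
    Measurable (Function.uncurry fun t ω => X (projIcc a b hab t) ω) :=
  measurable_uncurry_of_continuous_of_measurable
    (fun ω => (hcont ω).comp_continuous (continuous_subtype_val.comp continuous_projIcc)
      fun t => (projIcc a b hab t).2)
    fun t => hmeas _ (projIcc a b hab t).2

theorem measure_lt_setLIntegral_Icc_le {Ω : Type*} [MeasurableSpace Ω] {μ : Measure Ω}
    [SFinite μ] {F : ℝ → Ω → ℝ≥0∞} {T : ℝ} (hT : 0 ≤ T)
    (hcont : ∀ ω, ContinuousOn (F · ω) (Icc 0 T)) (hmeas : ∀ t ∈ Icc 0 T, Measurable (F t))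
    {p : ℝ} (hp : 1 ≤ p) {a h : ℝ} (hh : 0 < h) (hsub : Icc a (a + h) ⊆ Icc 0 T) (η : ℝ) :
    μ {ω | ENNReal.ofReal (h ^ (1 - η)) < ∫⁻ s in Icc a (a + h), F s ω} ≤
      (⨆ t ∈ Icc 0 T, ∫⁻ ω, F t ω ^ p ∂μ) * ENNReal.ofReal (h ^ (p * η)) := by
  -- `F` is only controlled on `[0, T]`; clamping time makes it jointly measurable on `ℝ × Ω`.
  set G : ℝ → Ω → ℝ≥0∞ := fun t ω => F (projIcc 0 T hT t) ω
  have hGF : ∀ t ∈ Icc 0 T, G t = F t := fun t ht => by simp only [G, projIcc_of_mem hT ht]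
  have hint : ∀ ω, ∫⁻ s in Icc a (a + h), F s ω = ∫⁻ s in Icc a (a + h), G s ω := fun ω =>
    setLIntegral_congr_fun measurableSet_Icc fun s hs => by rw [hGF s (hsub hs)]
  have hM : ∀ᵐ s ∂volume.restrict (Icc a (a + h)),
      ∫⁻ ω, G s ω ^ p ∂μ ≤ ⨆ t ∈ Icc 0 T, ∫⁻ ω, F t ω ^ p ∂μ := by
    filter_upwards [ae_restrict_mem measurableSet_Icc] with s hs
    rw [hGF s (hsub hs)]
    exact le_iSup₂ (f := fun t _ => ∫⁻ ω, F t ω ^ p ∂μ) s (hsub hs)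
  have hbound := measure_lt_lintegral_le_of_lintegral_rpow_le
    (measurable_uncurry_comp_projIcc hT hcont hmeas) hp hM (ε := ENNReal.ofReal (h ^ (1 - η)))
    (by simpa using Real.rpow_pos_of_pos hh _) ENNReal.ofReal_ne_top
  simp_rw [hint]
  rwa [Measure.restrict_apply_univ, Real.volume_Icc, add_sub_cancel_left, mul_div_assoc,
    ofReal_rpow_div_ofReal_rpow_one_sub hh] at hbound

theorem Icc_mul_div_subset_Icc {T : ℝ} (hT : 0 ≤ T) {n i : ℕ} (hi : i < n) :
    Icc (i * (T / n)) (i * (T / n) + T / n) ⊆ Icc 0 T := by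
  have hn : (0 : ℝ) < n := by exact_mod_cast (Nat.zero_le i).trans_lt hi
  refine Icc_subset_Icc (by positivity) ?_
  calc (i : ℝ) * (T / n) + T / n = (i + 1) * (T / n) := by ring
    _ ≤ n * (T / n) := by gcongr; exact_mod_cast hi
    _ = T := mul_div_cancel₀ _ hn.ne'

theorem tendsto_div_rpow_of_le_mul_rpow {ι : Type*} {l : Filter ι} {u h : ι → ℝ}
    (hpos : ∀ n, 0 < h n) (hlim : Tendsto h l (𝓝 0)) {C q r : ℝ} (hqr : q < r)
    (hu0 : ∀ n, 0 ≤ u n) (hu : ∀ n, u n ≤ C * h n ^ r) :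
    Tendsto (fun n => u n / h n ^ q) l (𝓝 0) := by
  have hrq : Tendsto (fun n => C * h n ^ (r - q)) l (𝓝 0) := by
    simpa [Real.zero_rpow (sub_pos.2 hqr).ne'] using
      (hlim.rpow_const (Or.inr (sub_pos.2 hqr).le)).const_mul C
  refine squeeze_zero (fun n => div_nonneg (hu0 n) (Real.rpow_nonneg (hpos n).le q))
    (fun n => ?_) hrq
  rw [div_le_iff₀ (Real.rpow_pos_of_pos (hpos n) q), mul_assoc, ← Real.rpow_add (hpos n),
    sub_add_cancel]
  exact hu n

theorem extreme_path_event_III_general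
    {Ω : Type*} [MeasurableSpace Ω] (P : Measure Ω) [IsProbabilityMeasure P]
    (T : ℝ) (hT : 0 < T)
    (L : ℝ → ℝ) (hL : ContDiffOn ℝ 2 L (Set.Ioi 0))
    (Y : ℝ → Ω → ℝ)
    (hYmeas : ∀ t, Measurable (Y t))
    (hYpos : ∀ t ∈ Set.Icc (0 : ℝ) T, ∀ ω, 0 < Y t ω)
    (hYcont : ∀ ω, ContinuousOn (fun t => Y t ω) (Set.Icc 0 T))
    (p : ℝ) (hp : 1 < p)
    (hLmom : (⨆ t ∈ Set.Icc (0 : ℝ) T,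
        ∫⁻ ω, (ENNReal.ofReal |L (Y t ω)|) ^ p ∂P) < ⊤)
    (η : ℝ) :
    ∀ q : ℝ, 0 < q → q < p * η →
      Tendsto (fun ℓ : ℕ =>
        (⨆ i ∈ Finset.range (2 ^ ℓ),
          (P {ω | ENNReal.ofReal ((T / 2 ^ ℓ) ^ (1 - η)) <
              ∫⁻ s in Set.Icc ((i : ℝ) * (T / 2 ^ ℓ)) (((i : ℝ) + 1) * (T / 2 ^ ℓ)),
                ENNReal.ofReal |L (Y s ω)|}).toReal)
          / (T / 2 ^ ℓ) ^ q) atTop (nhds 0) := by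
  intro q _ hqp
  set M := ⨆ t ∈ Icc (0 : ℝ) T, ∫⁻ ω, (ENNReal.ofReal |L (Y t ω)|) ^ p ∂P
  have hFcont : ∀ ω, ContinuousOn (fun t => ENNReal.ofReal |L (Y t ω)|) (Icc 0 T) := fun ω =>
    ENNReal.continuous_ofReal.comp_continuousOn
      (hL.continuousOn.comp (hYcont ω) fun t ht => hYpos t ht ω).abs
  have hFmeas : ∀ t ∈ Icc 0 T, Measurable fun ω => ENNReal.ofReal |L (Y t ω)| := fun t ht =>
    (hL.continuousOn.measurable_comp (hYmeas t) (hYpos t ht)).abs.ennreal_ofReal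
  have hcell : ∀ ℓ : ℕ, ∀ i ∈ Finset.range (2 ^ ℓ),
      (P {ω | ENNReal.ofReal ((T / 2 ^ ℓ) ^ (1 - η)) <
          ∫⁻ s in Icc ((i : ℝ) * (T / 2 ^ ℓ)) (((i : ℝ) + 1) * (T / 2 ^ ℓ)),
            ENNReal.ofReal |L (Y s ω)|}).toReal ≤ M.toReal * (T / 2 ^ ℓ) ^ (p * η) := by
    intro ℓ i hi
    have hsub := Icc_mul_div_subset_Icc hT.le (Finset.mem_range.1 hi)
    push_cast at hsub
    have hbound := measure_lt_setLIntegral_Icc_le (μ := P) hT.le hFcont hFmeas hp.le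
      (by positivity) hsub η
    rw [← add_one_mul] at hbound
    have hreal := ENNReal.toReal_mono (ENNReal.mul_ne_top hLmom.ne ENNReal.ofReal_ne_top) hbound
    rwa [ENNReal.toReal_mul, ENNReal.toReal_ofReal (by positivity)] at hreal
  refine tendsto_div_rpow_of_le_mul_rpow (fun ℓ => by positivity)
    (tendsto_const_nhds.div_atTop (tendsto_pow_atTop_atTop_of_one_lt one_lt_two)) hqp
    (fun ℓ => Real.iSup_nonneg fun i => Real.iSup_nonneg fun _ => ENNReal.toReal_nonneg)
    fun ℓ => Real.iSup_le (fun i => Real.iSup_le (hcell ℓ i) (by positivity)) (by positivity)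

/-- Lemma 3.2, (14): extreme path event III. -/
theorem extreme_path_event_III
    {Ω : Type*} [MeasurableSpace Ω] (P : Measure Ω) [IsProbabilityMeasure P]
    (T γ y : ℝ) (hT : 0 < T) (hγ : γ ≠ 0) (hy : 0 < y)
    (L : ℝ → ℝ) (hL : ContDiffOn ℝ 2 L (Set.Ioi 0))
    (W : ℝ → Ω → ℝ) (hW : IsStandardBM P W)
    (Y : ℝ → Ω → ℝ)
    (hYmeas : ∀ t, Measurable (Y t))
    (hYpos : ∀ t ∈ Set.Icc (0 : ℝ) T, ∀ ω, 0 < Y t ω)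
    (hYcont : ∀ ω, ContinuousOn (fun t => Y t ω) (Set.Icc 0 T))
    (hYsde : ∀ᵐ ω ∂P, ∀ t ∈ Set.Icc (0 : ℝ) T,
      Y t ω = y + (∫ s in (0 : ℝ)..t, L (Y s ω)) + γ * W t ω)
    (p : ℝ) (hp : 1 < p)
    (hLmom : (⨆ t ∈ Set.Icc (0 : ℝ) T,
        ∫⁻ ω, (ENNReal.ofReal |L (Y t ω)|) ^ p ∂P) < ⊤)
    (η : ℝ) (hη : η ∈ Set.Ioo (0 : ℝ) 1) :
    ∀ q : ℝ, 0 < q → q < p * η →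
      Tendsto (fun ℓ : ℕ =>
        (⨆ i ∈ Finset.range (2 ^ ℓ),
          (P {ω | ENNReal.ofReal ((T / 2 ^ ℓ) ^ (1 - η)) <
              ∫⁻ s in Set.Icc ((i : ℝ) * (T / 2 ^ ℓ)) (((i : ℝ) + 1) * (T / 2 ^ ℓ)),
                ENNReal.ofReal |L (Y s ω)|}).toReal)
          / (T / 2 ^ ℓ) ^ q) atTop (nhds 0) :=
  extreme_path_event_III_general P T hT L hL Y hYmeas hYpos hYcont p hp hLmom η

end
end

section
/- Feller boundary condition (H1) for the Lamperti-transformed CIR drift (verified in Section 4): Let σ>0, a ≥ σ²/2, κ∈ℝ, γ := σ/2, and L(y) := (a − σ²/4)/(2y) − (κ/2)y for y>0. Fix any d>0 and define, for x>0, v(x) := ∫_d^x ∫_d^y exp( −(2/γ²)·∫_z^y L(ξ) dξ ) dz dy. Then v(x) → +∞ as x → 0⁺. -/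
open Filter intervalIntegral

lemma cir_int_L (a κ : ℝ) {z y : ℝ} (hz : 0 < z) (hy : 0 < y) :
    ∫ ξ in z..y, (a / (2 * ξ) - κ / 2 * ξ)
      = a / 2 * (Real.log y - Real.log z) - κ / 4 * (y ^ 2 - z ^ 2) := by
  have h0 : (0 : ℝ) ∉ Set.uIcc z y := Set.notMem_uIcc_of_lt hz hy
  have h1 : IntervalIntegrable (fun ξ : ℝ => a / 2 * ξ⁻¹) MeasureTheory.volume z y := by
    apply ContinuousOn.intervalIntegrable
    exact continuousOn_const.mul (continuousOn_inv₀.mono fun t ht h => h0 (h ▸ ht))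
  have h2 : IntervalIntegrable (fun ξ : ℝ => κ / 2 * ξ) MeasureTheory.volume z y :=
    (continuous_const.mul continuous_id).intervalIntegrable _ _
  have hfe : ∀ ξ : ℝ, a / (2 * ξ) - κ / 2 * ξ = a / 2 * ξ⁻¹ - κ / 2 * ξ := by
    intro ξ
    rcases eq_or_ne ξ 0 with rfl | h
    · simp
    · field_simp
  simp only [hfe]
  rw [intervalIntegral.integral_sub h1 h2, intervalIntegral.integral_const_mul,
    intervalIntegral.integral_const_mul, integral_inv h0, integral_id,
    Real.log_div hy.ne' hz.ne']
  ring


lemma cir_main (p β x d : ℝ) (hp : 1 ≤ p) (hx : 0 < x) (hxd : x < d) :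
    Real.exp (-(|β| * d ^ 2)) * (d ^ 2 / 2 * (Real.log d - Real.log x) - (d ^ 2 - x ^ 2) / 4)
      ≤ ∫ y in d..x, ∫ z in d..y,
          Real.exp ((p * Real.log z - β * z ^ 2) - (p * Real.log y - β * y ^ 2)) := by
  have hd : 0 < d := hx.trans hxd
  have hxd' : x ≤ d := hxd.le
  have huIcc : Set.uIcc x d = Set.Icc x d := Set.uIcc_of_le hxd'
  set C : ℝ := |β| * d ^ 2 with hC
  set f : ℝ → ℝ := fun t => p * Real.log t - β * t ^ 2 with hf
  -- continuity of exp ∘ f on positive sets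
  have hfc : ∀ s : Set ℝ, s ⊆ Set.Ioi (0:ℝ) → ContinuousOn (fun t => Real.exp (f t)) s := by
    intro s hs
    apply Real.continuous_exp.comp_continuousOn
    apply ContinuousOn.sub
    · exact continuousOn_const.mul (Real.continuousOn_log.mono fun t ht h =>
        (ne_of_gt (hs ht)) (by simpa using h))
    · exact continuousOn_const.mul (continuous_pow 2).continuousOn
  have hsub : Set.Icc x d ⊆ Set.Ioi (0:ℝ) := fun t ht => hx.trans_le ht.1
  have hef_int : IntervalIntegrable (fun z => Real.exp (f z)) MeasureTheory.volume x d :=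
    (hfc _ (huIcc ▸ hsub)).intervalIntegrable
  -- Ψ y = ∫_d^y exp(f z)
  have hΨ : ContinuousOn (fun y => ∫ z in d..y, Real.exp (f z)) (Set.Icc x d) := by
    rw [← huIcc]
    exact continuousOn_primitive_interval' hef_int (by rw [huIcc]; exact ⟨hxd', le_rfl⟩)
  set G : ℝ → ℝ := fun y => Real.exp (-f y) * ∫ z in y..d, Real.exp (f z) with hG
  have hGeq : ∀ y, G y = Real.exp (-f y) * -(∫ z in d..y, Real.exp (f z)) := by
    intro y; rw [hG]; simp only [intervalIntegral.integral_symm d y]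
  have hf_cont : ContinuousOn f (Set.Icc x d) :=
    (continuousOn_const.mul (Real.continuousOn_log.mono fun t ht h =>
      (ne_of_gt (hsub ht)) (by simpa using h))).sub
      (continuousOn_const.mul (continuous_pow 2).continuousOn)
  have hG_cont : ContinuousOn G (Set.Icc x d) := by
    rw [funext hGeq]
    exact (Real.continuous_exp.comp_continuousOn hf_cont.neg).mul hΨ.neg
  set H : ℝ → ℝ := fun y => Real.exp (-C) * ((d ^ 2 - y ^ 2) / (2 * y)) with hH
  have hH_cont : ContinuousOn H (Set.Icc x d) := by
    apply continuousOn_const.mul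
    apply ContinuousOn.div
    · exact (continuous_const.sub (continuous_pow 2)).continuousOn
    · exact (continuous_const.mul continuous_id).continuousOn
    · intro t ht
      have := hsub ht
      simp only [Set.mem_Ioi] at this
      positivity
  -- pointwise bound H ≤ G on Icc x d
  have hpt : ∀ y ∈ Set.Icc x d, H y ≤ G y := by
    intro y hy
    have hy0 : 0 < y := hx.trans_le hy.1
    have hyd : y ≤ d := hy.2
    have hG' : G y = ∫ z in y..d, Real.exp (-f y) * Real.exp (f z) := by
      rw [show G y = Real.exp (-f y) * ∫ z in y..d, Real.exp (f z) from rfl,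
        ← intervalIntegral.integral_const_mul]
    have hint2 : IntervalIntegrable (fun z => Real.exp (-f y) * Real.exp (f z))
        MeasureTheory.volume y d := by
      apply ContinuousOn.intervalIntegrable
      exact continuousOn_const.mul ((hfc _ (fun t ht => hy0.trans_le
        ((Set.uIcc_of_le hyd ▸ ht : t ∈ Set.Icc y d).1))))
    have hint1 : IntervalIntegrable (fun z => Real.exp (-C) * (z / y))
        MeasureTheory.volume y d :=
      (continuous_const.mul (continuous_id.div_const y)).intervalIntegrable _ _
    have hcomp : (∫ z in y..d, Real.exp (-C) * (z / y))
        ≤ ∫ z in y..d, Real.exp (-f y) * Real.exp (f z) := by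
      apply intervalIntegral.integral_mono_on hyd hint1 hint2
      intro z hz
      have hz0 : 0 < z := hy0.trans_le hz.1
      have hzy : y ≤ z := hz.1
      have hzd : z ≤ d := hz.2
      rw [← Real.exp_add]
      have hzyexp : z / y = Real.exp (Real.log z - Real.log y) := by
        rw [Real.exp_sub, Real.exp_log hz0, Real.exp_log hy0]
      rw [hzyexp, ← Real.exp_add]
      apply Real.exp_le_exp.mpr
      have hlog : Real.log y ≤ Real.log z := Real.log_le_log hy0 hzy
      have hsq1 : y ^ 2 ≤ z ^ 2 := by nlinarith
      have hsq2 : z ^ 2 ≤ d ^ 2 := by nlinarith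
      have hA : β * (z ^ 2 - y ^ 2) ≤ |β| * (z ^ 2 - y ^ 2) :=
        mul_le_mul_of_nonneg_right (le_abs_self β) (by linarith)
      have hB : |β| * (z ^ 2 - y ^ 2) ≤ |β| * d ^ 2 :=
        mul_le_mul_of_nonneg_left (by nlinarith) (abs_nonneg β)
      have hC2 : 0 ≤ (p - 1) * (Real.log z - Real.log y) :=
        mul_nonneg (by linarith) (by linarith)
      simp only [hf, hC]
      nlinarith
    have hval : (∫ z in y..d, Real.exp (-C) * (z / y)) = H y := by
      have : ∀ z : ℝ, Real.exp (-C) * (z / y) = (Real.exp (-C) / y) * z := fun z => by ring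
      simp only [this]
      rw [intervalIntegral.integral_const_mul, integral_id]
      show _ = Real.exp (-C) * ((d ^ 2 - y ^ 2) / (2 * y))
      ring
    rw [← hval, hG']
    exact hcomp
  -- now the double integral
  have hstep1 : (∫ y in d..x, ∫ z in d..y, Real.exp (f z - f y))
      = ∫ y in d..x, Real.exp (-f y) * ∫ z in d..y, Real.exp (f z) := by
    congr 1
    funext y
    rw [← intervalIntegral.integral_const_mul]
    congr 1
    funext z
    rw [← Real.exp_add]
    ring_nf
  have hstep2 : (∫ y in d..x, Real.exp (-f y) * ∫ z in d..y, Real.exp (f z))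
      = ∫ y in x..d, G y := by
    rw [intervalIntegral.integral_symm, ← intervalIntegral.integral_neg]
    congr 1
    funext y
    rw [hGeq y]
    ring
  have hmono : (∫ y in x..d, H y) ≤ ∫ y in x..d, G y :=
    intervalIntegral.integral_mono_on hxd'
      ((show ContinuousOn H (Set.uIcc x d) by rw [huIcc]; exact hH_cont).intervalIntegrable)
      ((show ContinuousOn G (Set.uIcc x d) by rw [huIcc]; exact hG_cont).intervalIntegrable)
      hpt
  have hHval : (∫ y in x..d, H y)
      = Real.exp (-C) * (d ^ 2 / 2 * (Real.log d - Real.log x) - (d ^ 2 - x ^ 2) / 4) := by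
    have h0 : (0 : ℝ) ∉ Set.uIcc x d := Set.notMem_uIcc_of_lt hx hd
    have hcongr : Set.EqOn H
        (fun y => (Real.exp (-C) * d ^ 2 / 2) * y⁻¹ - (Real.exp (-C) / 2) * y)
        (Set.uIcc x d) := by
      intro y hy
      have hy0 : (0:ℝ) < y := hx.trans_le ((huIcc ▸ hy : y ∈ Set.Icc x d).1)
      simp only [hH]
      field_simp
    rw [intervalIntegral.integral_congr hcongr]
    have hi1 : IntervalIntegrable (fun y : ℝ => (Real.exp (-C) * d ^ 2 / 2) * y⁻¹)
        MeasureTheory.volume x d := by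
      apply ContinuousOn.intervalIntegrable
      exact continuousOn_const.mul (continuousOn_inv₀.mono fun t ht h => h0 (h ▸ ht))
    have hi2 : IntervalIntegrable (fun y : ℝ => (Real.exp (-C) / 2) * y)
        MeasureTheory.volume x d :=
      (continuous_const.mul continuous_id).intervalIntegrable _ _
    rw [intervalIntegral.integral_sub hi1 hi2, intervalIntegral.integral_const_mul,
      intervalIntegral.integral_const_mul, integral_inv h0, integral_id,
      Real.log_div hd.ne' hx.ne']
    ring
  calc Real.exp (-C) * (d ^ 2 / 2 * (Real.log d - Real.log x) - (d ^ 2 - x ^ 2) / 4)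
      = ∫ y in x..d, H y := hHval.symm
    _ ≤ ∫ y in x..d, G y := hmono
    _ = ∫ y in d..x, ∫ z in d..y, Real.exp (f z - f y) := by rw [hstep1, hstep2]
    _ = _ := rfl


lemma cir_exp_arg (σ a κ : ℝ) {z y : ℝ} (hz : 0 < z) (hy : 0 < y) :
    -(2 / (σ / 2) ^ 2) * ∫ ξ in z..y, ((a - σ ^ 2 / 4) / (2 * ξ) - κ / 2 * ξ)
      = ((2 / (σ / 2) ^ 2 * (a - σ ^ 2 / 4) / 2) * Real.log z
            - (2 / (σ / 2) ^ 2 * κ / 4) * z ^ 2)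
        - ((2 / (σ / 2) ^ 2 * (a - σ ^ 2 / 4) / 2) * Real.log y
            - (2 / (σ / 2) ^ 2 * κ / 4) * y ^ 2) := by
  rw [cir_int_L (a - σ ^ 2 / 4) κ hz hy]; ring

set_option maxHeartbeats 1000000 in
/-- Feller boundary condition (H1) for the Lamperti-transformed CIR drift
`L(y) = (a - σ²/4)/(2y) - (κ/2)y` with `γ = σ/2`: the scale-type function
`v(x) = ∫_d^x ∫_d^y exp(-(2/γ²) ∫_z^y L(ξ) dξ) dz dy` tends to `+∞` as `x → 0⁺`. -/
theorem feller_condition_CIR_lamperti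
    (σ a κ d : ℝ) (hσ : 0 < σ) (ha : σ ^ 2 / 2 ≤ a) (hd : 0 < d) :
    Tendsto (fun x : ℝ =>
        ∫ y in d..x, ∫ z in d..y,
          Real.exp (-(2 / (σ / 2) ^ 2) *
            ∫ ξ in z..y, ((a - σ ^ 2 / 4) / (2 * ξ) - κ / 2 * ξ)))
      (nhdsWithin 0 (Set.Ioi 0)) atTop := by
  have hσ2 : (0:ℝ) < σ ^ 2 := pow_pos hσ 2
  have hσ2' : (0:ℝ) < (σ / 2) ^ 2 := pow_pos (div_pos hσ two_pos) 2
  have hp : 1 ≤ 2 / (σ / 2) ^ 2 * (a - σ ^ 2 / 4) / 2 := by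
    have hpe : 2 / (σ / 2) ^ 2 * (a - σ ^ 2 / 4) / 2 = (4 * a - σ ^ 2) / σ ^ 2 := by
      field_simp; ring
    rw [hpe, le_div_iff₀ hσ2]; nlinarith
  have key : ∀ x ∈ Set.Ioo (0:ℝ) d,
      Real.exp (-(|2 / (σ / 2) ^ 2 * κ / 4| * d ^ 2)) *
          (d ^ 2 / 2 * (Real.log d - Real.log x) - (d ^ 2 - x ^ 2) / 4)
        ≤ ∫ y in d..x, ∫ z in d..y,
            Real.exp (-(2 / (σ / 2) ^ 2) *
              ∫ ξ in z..y, ((a - σ ^ 2 / 4) / (2 * ξ) - κ / 2 * ξ)) := by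
    intro x hx
    have hcongr : (∫ y in d..x, ∫ z in d..y,
          Real.exp (-(2 / (σ / 2) ^ 2) *
            ∫ ξ in z..y, ((a - σ ^ 2 / 4) / (2 * ξ) - κ / 2 * ξ)))
        = ∫ y in d..x, ∫ z in d..y,
            Real.exp (((2 / (σ / 2) ^ 2 * (a - σ ^ 2 / 4) / 2) * Real.log z
                  - (2 / (σ / 2) ^ 2 * κ / 4) * z ^ 2)
              - ((2 / (σ / 2) ^ 2 * (a - σ ^ 2 / 4) / 2) * Real.log y
                  - (2 / (σ / 2) ^ 2 * κ / 4) * y ^ 2)) := by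
      apply intervalIntegral.integral_congr
      intro y hy
      have hy0 : 0 < y := lt_of_lt_of_le (lt_min hd hx.1) hy.1
      apply intervalIntegral.integral_congr
      intro z hz
      have hz0 : 0 < z := lt_of_lt_of_le (lt_min hd hy0) hz.1
      exact congrArg Real.exp (cir_exp_arg σ a κ hz0 hy0)
    rw [hcongr]
    exact cir_main _ _ x d hp hx.1 hx.2
  have h1 : Tendsto (fun x : ℝ => Real.log d - Real.log x)
      (nhdsWithin 0 (Set.Ioi 0)) atTop := by
    have h := tendsto_neg_atBot_atTop.comp Real.tendsto_log_nhdsGT_zero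
    have h' := tendsto_atTop_add_const_left _ (Real.log d) h
    simpa [sub_eq_add_neg, Function.comp] using h'
  have h2 : Tendsto (fun x : ℝ => d ^ 2 / 2 * (Real.log d - Real.log x))
      (nhdsWithin 0 (Set.Ioi 0)) atTop :=
    h1.const_mul_atTop (by positivity)
  have h3 : Tendsto (fun x : ℝ => -((d ^ 2 - x ^ 2) / 4))
      (nhdsWithin 0 (Set.Ioi 0)) (nhds (-((d ^ 2 - 0 ^ 2) / 4))) := by
    have hc : Continuous fun x : ℝ => -((d ^ 2 - x ^ 2) / 4) := by continuity
    exact (hc.tendsto 0).mono_left nhdsWithin_le_nhds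
  have h4 : Tendsto (fun x : ℝ =>
      d ^ 2 / 2 * (Real.log d - Real.log x) + -((d ^ 2 - x ^ 2) / 4))
      (nhdsWithin 0 (Set.Ioi 0)) atTop := h2.atTop_add h3
  have hlow : Tendsto (fun x : ℝ => Real.exp (-(|2 / (σ / 2) ^ 2 * κ / 4| * d ^ 2)) *
      (d ^ 2 / 2 * (Real.log d - Real.log x) - (d ^ 2 - x ^ 2) / 4))
      (nhdsWithin 0 (Set.Ioi 0)) atTop := by
    simpa [sub_eq_add_neg] using
      h4.const_mul_atTop (Real.exp_pos (-(|2 / (σ / 2) ^ 2 * κ / 4| * d ^ 2)))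
  apply tendsto_atTop_mono' _ _ hlow
  filter_upwards [Ioo_mem_nhdsGT_of_mem (Set.mem_Ico.mpr ⟨le_refl (0:ℝ), hd⟩)] with x hx
  exact key x hx
end
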